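/- Let P be the Petersen graph, let s and t be adjacent vertices of P, and let P' = P − {s,t}. For every vertex w among the four degree-2 vertices of P', there exists a 2-colouring of V(P') such that: the class of colour 1 has exactly 5 vertices and the class of colour 2 has exactly 3 vertices; every monochromatic component has at most 2 vertices; and among the four degree-2 vertices of P', the vertex w receives colour 2 while the other three receive colour 1 (the 'unbalanced' colourings of the Petersen 4-pole). -/

import Mathlib

/-- Vertices of the Petersen graph: 2-element subsets of {1,...,5} (modelled as `Fin 5`). -/
abbrev PetersenVert : Type := {p : Finset (Fin 5) // p.card = 2}

/-- The Petersen graph as the Kneser graph K(5,2): two 2-subsets are adjacent iff disjoint. -/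
def Petersen : SimpleGraph PetersenVert where
  Adj a b := Disjoint a.1 b.1
  symm := ⟨fun _ _ h => Disjoint.symm h⟩
  loopless := by
    refine ⟨?_⟩
    intro a h
    have ha : a.1 = ∅ := by simpa using disjoint_self.mp h
    have := a.2
    rw [ha] at this
    simp at this

/-- The vertex set of `P' = P − {s, t}`. -/
def avoidSet (s t : PetersenVert) : Set PetersenVert := {v | v ≠ s ∧ v ≠ t}

/-- `P' = P − {s, t}`: the subgraph of the Petersen graph induced on the vertices
different from `s` and `t`. -/
def Pminus (s t : PetersenVert) : SimpleGraph (avoidSet s t) :=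
  Petersen.induce (avoidSet s t)

/-- `v` is one of the (four) vertices of degree 2 of `P' = P − {s, t}`. -/
def IsDeg2 (s t : PetersenVert) (v : avoidSet s t) : Prop :=
  ((Pminus s t).neighborSet v).ncard = 2

/-! The four vertices of degree 2 in `P − {s, t}` are the sets `{x, a}` with `x` the point outside
`s ∪ t` and `a ∈ s ∪ t`. Given `w = {x, a}`, give colour 2 to the vertices containing `a`. These
are the three 2-sets `{a, b}` other than `s` and `t`; they pairwise meet, so colour 2 is
independent. Colour 1 consists of the five 2-subsets of the 4-set `{1,…,5} ∖ {a}` other than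
whichever of `s`, `t` avoids `a`; within a 4-set, disjointness pairs each 2-set with its complement
only, so the monochromatic components have at most two vertices. -/

namespace SimpleGraph

variable {V : Type*} {G : SimpleGraph V}

lemma Walk.eq_or_adj_of_subsingleton_neighborSet (h : ∀ v, (G.neighborSet v).Subsingleton)
    {a b : V} (p : G.Walk a b) : b = a ∨ G.Adj a b := by
  induction p with
  | nil => exact Or.inl rfl
  | cons hxy _ ih =>
    rcases ih with rfl | hyz
    · exact Or.inr hxy
    · exact Or.inl (h _ hyz hxy.symm)

lemma ConnectedComponent.ncard_supp_le_two_of_subsingleton_neighborSet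
    (h : ∀ v, (G.neighborSet v).Subsingleton) (K : G.ConnectedComponent) : K.supp.ncard ≤ 2 := by
  induction K using ConnectedComponent.ind with
  | h v =>
    have hsupp : (G.connectedComponentMk v).supp ⊆ insert v (G.neighborSet v) := fun u hu =>
      (ConnectedComponent.eq.mp hu).symm.some.eq_or_adj_of_subsingleton_neighborSet h
    calc (G.connectedComponentMk v).supp.ncard
        ≤ (insert v (G.neighborSet v)).ncard := Set.ncard_le_ncard hsupp ((h v).finite.insert v)
      _ ≤ (G.neighborSet v).ncard + 1 := Set.ncard_insert_le _ _
      _ ≤ 2 := by have := (Set.ncard_le_one (h v).finite).mpr (h v); omega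

end SimpleGraph

instance (s t : PetersenVert) : Fintype (avoidSet s t) :=
  inferInstanceAs (Fintype {v // v ≠ s ∧ v ≠ t})

instance : DecidableRel Petersen.Adj :=
  fun a b => inferInstanceAs (Decidable (Disjoint a.1 b.1))

instance (s t : PetersenVert) : DecidableRel (Pminus s t).Adj :=
  fun a b => inferInstanceAs (Decidable (Petersen.Adj a b))

lemma isDeg2_iff_degree_eq_two {s t : PetersenVert} {v : avoidSet s t} :
    IsDeg2 s t v ↔ (Pminus s t).degree v = 2 := by
  rw [IsDeg2, Set.ncard_eq_toFinset_card', ← SimpleGraph.neighborFinset_def,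
    SimpleGraph.card_neighborFinset_eq_degree]

-- With `w = {x, a}` as above, `w ∩ (s ∪ t) = {a}`.
def unbalancedColouring (s t : PetersenVert) (w v : avoidSet s t) : Fin 2 :=
  if w.1.1 ∩ (s.1 ∪ t.1) ⊆ v.1.1 then 1 else 0

section UnbalancedColouring

variable {s t : PetersenVert} {w : avoidSet s t}

lemma card_unbalancedColouring_eq_zero (hst : Petersen.Adj s t) (hw : (Pminus s t).degree w = 2) :
    (Finset.univ.filter (unbalancedColouring s t w · = 0)).card = 5 := by
  revert s t w; decide

lemma card_unbalancedColouring_eq_one (hst : Petersen.Adj s t) (hw : (Pminus s t).degree w = 2) :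
    (Finset.univ.filter (unbalancedColouring s t w · = 1)).card = 3 := by
  revert s t w; decide

lemma unbalancedColouring_eq_one_iff (hst : Petersen.Adj s t) (hw : (Pminus s t).degree w = 2)
    {v : avoidSet s t} (hv : (Pminus s t).degree v = 2) :
    unbalancedColouring s t w v = 1 ↔ v = w := by
  revert s t w v; decide

lemma eq_of_adj_of_unbalancedColouring_eq (hst : Petersen.Adj s t)
    (hw : (Pminus s t).degree w = 2) {v u₁ : avoidSet s t} (h₁ : (Pminus s t).Adj v u₁)
    (hc₁ : unbalancedColouring s t w u₁ = unbalancedColouring s t w v) {u₂ : avoidSet s t}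
    (h₂ : (Pminus s t).Adj v u₂)
    (hc₂ : unbalancedColouring s t w u₂ = unbalancedColouring s t w v) :
    u₁ = u₂ := by
  -- `u₂` is bound after `h₁`, so that `decide` only enumerates it for neighbours `u₁` of `v`.
  revert s t w v u₁ u₂; decide

end UnbalancedColouring

/-- The "unbalanced" colourings of the Petersen 4-pole: for adjacent vertices `s, t` of
the Petersen graph, `P' = P − {s,t}`, and any vertex `w` among the four degree-2 vertices
of `P'`, there is a 2-colouring of `V(P')` (colour 1 is the value `0 : Fin 2`, colour 2
the value `1`) whose colour-1 class has exactly 5 vertices and colour-2 class exactly 3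
vertices, all monochromatic components have at most 2 vertices, and among the four
degree-2 vertices `w` gets colour 2 while the other three get colour 1. -/
theorem unbalanced_colouring_exists (s t : PetersenVert) (hst : Petersen.Adj s t)
    (w : avoidSet s t) (hw : IsDeg2 s t w) :
    ∃ c : avoidSet s t → Fin 2,
      {v : avoidSet s t | c v = 0}.ncard = 5 ∧
      {v : avoidSet s t | c v = 1}.ncard = 3 ∧
      (∀ i : Fin 2,
        ∀ K : ((Pminus s t).induce {v | c v = i}).ConnectedComponent, K.supp.ncard ≤ 2) ∧
      (∀ v : avoidSet s t, IsDeg2 s t v → (c v = 1 ↔ v = w)) := by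
  rw [isDeg2_iff_degree_eq_two] at hw
  refine ⟨unbalancedColouring s t w, ?_, ?_, fun i K => ?_, fun v hv => ?_⟩
  · rw [Set.ncard_eq_toFinset_card', Set.toFinset_ofPred]
    exact card_unbalancedColouring_eq_zero hst hw
  · rw [Set.ncard_eq_toFinset_card', Set.toFinset_ofPred]
    exact card_unbalancedColouring_eq_one hst hw
  · refine K.ncard_supp_le_two_of_subsingleton_neighborSet fun v u₁ hu₁ u₂ hu₂ => Subtype.ext ?_
    exact eq_of_adj_of_unbalancedColouring_eq hst hw hu₁ (u₁.2.trans v.2.symm) hu₂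
      (u₂.2.trans v.2.symm)
  · exact unbalancedColouring_eq_one_iff hst hw (isDeg2_iff_degree_eq_two.mp hv)
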